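/- arXiv:1710.08022 — 7 statements merged into one kernel-verified Lean document; each statement's English description precedes it below -/
import Mathlib

section
/- If φ: k[X₁,...,Xₘ] → k[X₁,...,Xₘ] is a k-algebra automorphism with φ(Xᵢ) = Fᵢ, then the determinant of the Jacobian matrix (∂Fᵢ/∂Xⱼ) is a nonzero element of k (i.e., a unit constant polynomial). -/
/-!
Writing `ψ = φ⁻¹` and `Gᵢ = ψ(Xᵢ)`, we have `Gᵢ(F) = Xᵢ`. Differentiating with the chain rule gives
`(∂Gᵢ/∂Xₗ)(F) · (∂Fₗ/∂Xⱼ) = δᵢⱼ`, so the Jacobian matrix of `F` is invertible over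
`k[X₁,...,Xₘ]` and its determinant is a unit, i.e. a nonzero constant.
-/

open MvPolynomial

namespace MvPolynomial

variable {R σ τ : Type*}

theorem pderiv_aeval [CommSemiring R] [Fintype σ] (F : σ → MvPolynomial τ R) (j : τ)
    (p : MvPolynomial σ R) :
    pderiv j (aeval F p) = ∑ l, aeval F (pderiv l p) * pderiv j (F l) := by
  classical
  induction p using MvPolynomial.induction_on with
  | C a => simp
  | add p q hp hq => simp only [map_add, hp, hq, add_mul, Finset.sum_add_distrib]
  | mul_X p i hp =>
    have pderiv_mul_X :
        ∀ l, pderiv l (p * X i) = pderiv l p * X i + if i = l then p else 0 := by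
      intro l
      rw [pderiv_mul, pderiv_X, Pi.single_apply]
      split_ifs <;> simp
    simp only [map_mul, aeval_X, pderiv_mul, hp, pderiv_mul_X, map_add, add_mul,
      Finset.sum_add_distrib, Finset.sum_mul]
    congr 1
    · exact Finset.sum_congr rfl fun l _ => by ring
    · simp only [apply_ite (aeval F), map_zero, ite_mul, zero_mul, Finset.sum_ite_eq,
        Finset.mem_univ, if_true]

theorem aeval_jacobian_mul_jacobian [CommSemiring R] [Fintype σ] [DecidableEq σ]
    {F G : σ → MvPolynomial σ R} (hGF : ∀ i, aeval F (G i) = X i) :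
    Matrix.of (fun i l => aeval F (pderiv l (G i))) * Matrix.of (fun l j => pderiv j (F l)) =
      1 := by
  ext i j
  rw [Matrix.mul_apply]
  simp only [Matrix.of_apply]
  rw [← pderiv_aeval, hGF, pderiv_X, Matrix.one_apply, Pi.single_apply]

theorem isUnit_det_jacobian [CommRing R] [Fintype σ] [DecidableEq σ]
    {F G : σ → MvPolynomial σ R} (hGF : ∀ i, aeval F (G i) = X i) :
    IsUnit (Matrix.of fun i j => pderiv j (F i)).det :=
  Matrix.isUnit_det_of_left_inverse (aeval_jacobian_mul_jacobian hGF)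

theorem exists_eq_C_of_isUnit [CommRing R] [IsReduced R] {p : MvPolynomial σ R}
    (hp : IsUnit p) : ∃ c, IsUnit c ∧ p = C c := by
  obtain ⟨hc, hdeg⟩ := isUnit_iff_totalDegree_of_isReduced.mp hp
  exact ⟨p.coeff 0, hc, totalDegree_eq_zero_iff_eq_C.mp hdeg⟩

end MvPolynomial

theorem stmt1_general (k : Type*) [Field k] (m : ℕ)
    (φ : MvPolynomial (Fin m) k ≃ₐ[k] MvPolynomial (Fin m) k)
    (F : Fin m → MvPolynomial (Fin m) k) (hF : ∀ i, φ (X i) = F i) :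
    ∃ c : k, c ≠ 0 ∧
      Matrix.det (Matrix.of fun i j => pderiv j (F i)) = C c := by
  have hφ : (φ : MvPolynomial (Fin m) k →ₐ[k] MvPolynomial (Fin m) k) = aeval F :=
    algHom_ext fun i => by simp [hF]
  have hGF : ∀ i, aeval F (φ.symm (X i)) = X i := fun i => by
    rw [← hφ]
    exact φ.apply_symm_apply (X i)
  obtain ⟨c, hc, hdet⟩ := exists_eq_C_of_isUnit (isUnit_det_jacobian hGF)
  exact ⟨c, hc.ne_zero, hdet⟩

/-- If `φ : k[X₁,...,Xₘ] → k[X₁,...,Xₘ]` is a `k`-algebra automorphism with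
`φ(Xᵢ) = Fᵢ`, then the determinant of the Jacobian matrix `(∂Fᵢ/∂Xⱼ)` is a
nonzero constant polynomial. -/
theorem stmt1 (k : Type*) [Field k] [CharZero k] (m : ℕ)
    (φ : MvPolynomial (Fin m) k ≃ₐ[k] MvPolynomial (Fin m) k)
    (F : Fin m → MvPolynomial (Fin m) k) (hF : ∀ i, φ (X i) = F i) :
    ∃ c : k, c ≠ 0 ∧
      Matrix.det (Matrix.of fun i j => pderiv j (F i)) = C c :=
  stmt1_general k m φ F hF
end

section
/- Let F, G ∈ k[X,Y] such that det Jac(F,G) ∈ k*. Then the system F(𝒰(t),𝒱(t)) = tX+(1-t)F(X,Y), G(𝒰(t),𝒱(t)) = tY+(1-t)G(X,Y) with initial conditions 𝒰(0)=X, 𝒱(0)=Y has a unique solution 𝒰(t), 𝒱(t) in the formal power series ring k[X,Y][[t]]. -/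
/-!
The Jacobian matrix `J` of `P = (F, G)` at `a = (X, Y)` is invertible over `k[X,Y]`, and the
right-hand side `T` of the system has constant term `P(a)`. A first-order Taylor expansion shows
that if `u ≡ v (mod tⁿ⁺¹)` and `v(0) = a`, then `P(u) - P(v) ≡ J (u - v) (mod tⁿ⁺²)`. Applied to
two solutions, this lifts their congruence modulo `tⁿ⁺¹` to one modulo `tⁿ⁺²`, giving uniqueness.
For existence, Newton's iteration with the Jacobian frozen at `a` kills the defect `T - P(u)` one
coefficient at a time; the corrections converge `t`-adically and their limit is the solution.
-/

open MvPolynomial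

lemma dvd_sub_of_sq_dvd_sub_sub_sum {S ι : Type*} [CommRing S] [Fintype ι] {d x y : S}
    {c w : ι → S} (hw : ∀ j, d ∣ w j) (h : d ^ 2 ∣ x - y - ∑ j, c j * w j) : d ∣ x - y := by
  rw [← sub_add_cancel (x - y) (∑ j, c j * w j)]
  exact dvd_add ((dvd_pow_self d two_ne_zero).trans h)
    (Finset.dvd_sum fun j _ => (hw j).mul_left _)

namespace MvPolynomial

variable {k σ : Type*} [CommRing k] [DecidableEq σ]

noncomputable def jacobianMatrix (P : σ → MvPolynomial σ k) : Matrix σ σ (MvPolynomial σ k) :=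
  Matrix.of fun i j => pderiv j (P i)

variable [Fintype σ] {S : Type*} [CommRing S] [Algebra k S] {d : S} {u v : σ → S}

lemma sq_dvd_aeval_sub_aeval_sub_sum_pderiv (h : ∀ j, d ∣ u j - v j) (p : MvPolynomial σ k) :
    d ^ 2 ∣ aeval u p - aeval v p - ∑ j, aeval v (pderiv j p) * (u j - v j) := by
  induction p using MvPolynomial.induction_on with
  | C r => simp
  | add p q hp hq =>
    convert dvd_add hp hq using 1
    simp only [map_add, add_mul, Finset.sum_add_distrib]
    ring
  | mul_X p i hp =>
    have hsum : ∑ j, aeval v (pderiv j (p * X i)) * (u j - v j)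
        = (∑ j, aeval v (pderiv j p) * (u j - v j)) * v i + aeval v p * (u i - v i) := by
      simp only [pderiv_mul, pderiv_X, Pi.single_apply, mul_ite, mul_one, mul_zero, map_add,
        map_mul, aeval_X, add_mul, Finset.sum_add_distrib, Finset.sum_mul, ite_mul, zero_mul,
        apply_ite (aeval v), map_zero, Finset.sum_ite_eq, Finset.mem_univ, if_true]
      exact congrArg (· + _) (Finset.sum_congr rfl fun j _ => mul_right_comm _ _ _)
    rw [hsum, map_mul, map_mul, aeval_X, aeval_X]
    have key : aeval u p * u i - aeval v p * v i
        - ((∑ j, aeval v (pderiv j p) * (u j - v j)) * v i + aeval v p * (u i - v i))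
        = (aeval u p - aeval v p - ∑ j, aeval v (pderiv j p) * (u j - v j)) * v i
          + (aeval u p - aeval v p) * (u i - v i) := by ring
    rw [key]
    refine dvd_add (hp.mul_right _) ?_
    rw [sq]
    exact mul_dvd_mul (dvd_sub_of_sq_dvd_sub_sub_sum h hp) (h i)

lemma dvd_aeval_sub_aeval (h : ∀ j, d ∣ u j - v j) (p : MvPolynomial σ k) :
    d ∣ aeval u p - aeval v p :=
  dvd_sub_of_sq_dvd_sub_sub_sum h (sq_dvd_aeval_sub_aeval_sub_sum_pderiv h p)

end MvPolynomial

namespace PowerSeries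

variable {R : Type*} [CommRing R]

lemma eq_zero_of_forall_X_pow_dvd {f : R⟦X⟧} (h : ∀ n, X ^ n ∣ f) : f = 0 := by
  ext m
  simpa using X_pow_dvd_iff.mp (h (m + 1)) m m.lt_succ_self

lemma constantCoeff_eq_of_X_dvd_sub {f g : R⟦X⟧} (h : X ∣ f - g) :
    constantCoeff f = constantCoeff g := by
  rwa [X_dvd_iff, map_sub, sub_eq_zero] at h

lemma X_pow_succ_dvd_sub_C_coeff_mul_X_pow {f : R⟦X⟧} {n : ℕ} (h : X ^ n ∣ f) :
    X ^ (n + 1) ∣ f - C (coeff n f) * X ^ n := by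
  refine X_pow_dvd_iff.mpr fun m hm => ?_
  rcases (Nat.lt_succ_iff.mp hm).lt_or_eq with hm | rfl
  · simp [hm.ne, X_pow_dvd_iff.mp h m hm]
  · simp

lemma exists_forall_X_pow_succ_dvd_sub {W : ℕ → R⟦X⟧} (hW : ∀ n, X ^ (n + 1) ∣ W (n + 1) - W n) :
    ∃ f : R⟦X⟧, ∀ n, X ^ (n + 1) ∣ f - W n := by
  have stable : ∀ m n, m ≤ n → coeff m (W n) = coeff m (W m) := by
    intro m n hmn
    induction n, hmn using Nat.le_induction with
    | base => rfl
    | succ n hmn ih =>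
      rw [← ih, ← sub_eq_zero, ← map_sub]
      exact X_pow_dvd_iff.mp (hW n) m (Nat.lt_succ_of_le hmn)
  refine ⟨mk fun m => coeff m (W m), fun n => X_pow_dvd_iff.mpr fun m hm => ?_⟩
  rw [map_sub, coeff_mk, stable m n (Nat.lt_succ_iff.mp hm), sub_self]

end PowerSeries

open scoped Matrix

namespace MvPolynomial

variable {k R σ : Type*} [CommRing k] [CommRing R] [Algebra k R]

lemma constantCoeff_aeval_powerSeries (u : σ → PowerSeries R) (p : MvPolynomial σ k) :
    PowerSeries.constantCoeff (aeval u p) = aeval (fun j => PowerSeries.constantCoeff (u j)) p := by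
  induction p using MvPolynomial.induction_on <;> simp_all [PowerSeries.algebraMap_apply]

lemma aeval_powerSeries_C (a : σ → R) (p : MvPolynomial σ k) :
    aeval (fun j => PowerSeries.C (a j)) p = PowerSeries.C (aeval a p) := by
  induction p using MvPolynomial.induction_on <;> simp_all [PowerSeries.algebraMap_apply]

lemma X_dvd_aeval_sub_C {u : σ → PowerSeries R} {a : σ → R}
    (hu : ∀ j, PowerSeries.constantCoeff (u j) = a j) (p : MvPolynomial σ k) :
    PowerSeries.X ∣ aeval u p - PowerSeries.C (aeval a p) := by
  rw [PowerSeries.X_dvd_iff, map_sub, constantCoeff_aeval_powerSeries,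
    PowerSeries.constantCoeff_C, _root_.funext hu, sub_self]

variable [Fintype σ] [DecidableEq σ] {P : σ → MvPolynomial σ k} {a : σ → R}

lemma X_pow_dvd_aeval_sub_aeval_sub_mulVec {u v : σ → PowerSeries R}
    (hv : ∀ j, PowerSeries.constantCoeff (v j) = a j) {n : ℕ}
    (h : ∀ j, PowerSeries.X ^ (n + 1) ∣ u j - v j) (i : σ) :
    PowerSeries.X ^ (n + 2) ∣ aeval u (P i) - aeval v (P i)
      - (((jacobianMatrix P).map (aeval a)).map PowerSeries.C *ᵥ (u - v)) i := by
  have taylor : PowerSeries.X ^ (n + 2) ∣ aeval u (P i) - aeval v (P i)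
      - ∑ j, aeval v (pderiv j (P i)) * (u j - v j) := by
    refine (pow_dvd_pow _ (by omega : n + 2 ≤ (n + 1) * 2)).trans ?_
    rw [pow_mul]
    exact sq_dvd_aeval_sub_aeval_sub_sum_pderiv h (P i)
  have frozen : PowerSeries.X ^ (n + 2) ∣ ∑ j, (aeval v (pderiv j (P i))
      - PowerSeries.C (aeval a (pderiv j (P i)))) * (u j - v j) :=
    Finset.dvd_sum fun j _ => by
      rw [pow_succ']
      exact mul_dvd_mul (X_dvd_aeval_sub_C hv _) (h j)
  convert dvd_add taylor frozen using 1
  simp only [Matrix.mulVec, dotProduct, Matrix.map_apply, jacobianMatrix, Matrix.of_apply,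
    Pi.sub_apply, sub_mul, Finset.sum_sub_distrib]
  ring

theorem eq_of_forall_aeval_eq (hJ : IsUnit ((jacobianMatrix P).map (aeval a)).det)
    {u v : σ → PowerSeries R} (hu : ∀ j, PowerSeries.constantCoeff (u j) = a j)
    (hv : ∀ j, PowerSeries.constantCoeff (v j) = a j) (h : ∀ i, aeval u (P i) = aeval v (P i)) :
    u = v := by
  suffices ∀ n j, PowerSeries.X ^ (n + 1) ∣ u j - v j from
    _root_.funext fun j => sub_eq_zero.mp <| PowerSeries.eq_zero_of_forall_X_pow_dvd fun n =>
      (pow_dvd_pow _ n.le_succ).trans (this n j)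
  intro n
  induction n with
  | zero => simp [PowerSeries.X_dvd_iff, hu, hv]
  | succ n ih =>
    set J := (jacobianMatrix P).map (aeval a)
    have hJw : ∀ i, PowerSeries.X ^ (n + 2) ∣ (J.map PowerSeries.C *ᵥ (u - v)) i := fun i => by
      simpa only [h i, sub_self, zero_sub, dvd_neg] using
        X_pow_dvd_aeval_sub_aeval_sub_mulVec (P := P) hv ih i
    have hw : J⁻¹.map PowerSeries.C *ᵥ (J.map PowerSeries.C *ᵥ (u - v)) = u - v := by
      rw [Matrix.mulVec_mulVec, ← Matrix.map_mul, J.nonsing_inv_mul hJ,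
        Matrix.map_one _ (map_zero _) (map_one _), Matrix.one_mulVec]
    intro j
    rw [← Pi.sub_apply, ← hw]
    exact Finset.dvd_sum fun l _ => (hJw l).mul_left _

noncomputable def newtonStep (P : σ → MvPolynomial σ k) (a : σ → R) (T : σ → PowerSeries R)
    (n : ℕ) (u : σ → PowerSeries R) : σ → PowerSeries R :=
  u + fun j => PowerSeries.C ((((jacobianMatrix P).map (aeval a))⁻¹ *ᵥ
    fun i => PowerSeries.coeff (n + 1) (T i - aeval u (P i))) j) * PowerSeries.X ^ (n + 1)

noncomputable def newtonSeq (P : σ → MvPolynomial σ k) (a : σ → R) (T : σ → PowerSeries R) :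
    ℕ → σ → PowerSeries R
  | 0 => fun j => PowerSeries.C (a j)
  | n + 1 => newtonStep P a T n (newtonSeq P a T n)

lemma X_pow_dvd_newtonStep_sub (P : σ → MvPolynomial σ k) (a : σ → R) (T : σ → PowerSeries R)
    (n : ℕ) (u : σ → PowerSeries R) (j : σ) :
    PowerSeries.X ^ (n + 1) ∣ newtonStep P a T n u j - u j := by
  simp only [newtonStep, Pi.add_apply, add_sub_cancel_left]
  exact dvd_mul_left _ _

lemma X_pow_dvd_sub_aeval_newtonStep (hJ : IsUnit ((jacobianMatrix P).map (aeval a)).det)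
    {T u : σ → PowerSeries R} (hu : ∀ j, PowerSeries.constantCoeff (u j) = a j) {n : ℕ}
    (h : ∀ i, PowerSeries.X ^ (n + 1) ∣ T i - aeval u (P i)) (i : σ) :
    PowerSeries.X ^ (n + 2) ∣ T i - aeval (newtonStep P a T n u) (P i) := by
  set J := (jacobianMatrix P).map (aeval a)
  set δ := fun i => PowerSeries.coeff (n + 1) (T i - aeval u (P i))
  have hstep : J.map PowerSeries.C *ᵥ (newtonStep P a T n u - u)
      = fun i => PowerSeries.C (δ i) * PowerSeries.X ^ (n + 1) := by
    have hJδ : J *ᵥ (J⁻¹ *ᵥ δ) = δ := by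
      rw [Matrix.mulVec_mulVec, J.mul_nonsing_inv hJ, Matrix.one_mulVec]
    ext i
    rw [← hJδ, RingHom.map_mulVec]
    simp only [newtonStep, add_sub_cancel_left, Matrix.mulVec, dotProduct, Finset.sum_mul,
      Function.comp_apply, mul_assoc]
    rfl
  have lin :=
    X_pow_dvd_aeval_sub_aeval_sub_mulVec (P := P) hu (X_pow_dvd_newtonStep_sub P a T n u) i
  rw [hstep] at lin
  have rem := PowerSeries.X_pow_succ_dvd_sub_C_coeff_mul_X_pow (h i)
  convert dvd_sub rem lin using 1
  ring

lemma newtonSeq_spec (hJ : IsUnit ((jacobianMatrix P).map (aeval a)).det)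
    {T : σ → PowerSeries R} (hT : ∀ i, PowerSeries.constantCoeff (T i) = aeval a (P i)) (n : ℕ) :
    (∀ j, PowerSeries.constantCoeff (newtonSeq P a T n j) = a j) ∧
      ∀ i, PowerSeries.X ^ (n + 1) ∣ T i - aeval (newtonSeq P a T n) (P i) := by
  induction n with
  | zero =>
    refine ⟨fun j => PowerSeries.constantCoeff_C _, fun i => ?_⟩
    rw [zero_add, pow_one, newtonSeq, aeval_powerSeries_C, PowerSeries.X_dvd_iff, map_sub, hT,
      PowerSeries.constantCoeff_C, sub_self]
  | succ n ih =>
    refine ⟨fun j => ?_, X_pow_dvd_sub_aeval_newtonStep hJ ih.1 ih.2⟩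
    rw [newtonSeq, ← ih.1 j]
    exact PowerSeries.constantCoeff_eq_of_X_dvd_sub
      ((dvd_pow_self _ n.succ_ne_zero).trans (X_pow_dvd_newtonStep_sub P a T n _ j))

theorem exists_forall_aeval_eq (hJ : IsUnit ((jacobianMatrix P).map (aeval a)).det)
    (T : σ → PowerSeries R) (hT : ∀ i, PowerSeries.constantCoeff (T i) = aeval a (P i)) :
    ∃ u : σ → PowerSeries R, (∀ i, aeval u (P i) = T i) ∧
      ∀ j, PowerSeries.constantCoeff (u j) = a j := by
  choose u hu using fun j => PowerSeries.exists_forall_X_pow_succ_dvd_sub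
    (W := fun n => newtonSeq P a T n j) fun n => X_pow_dvd_newtonStep_sub P a T n _ j
  refine ⟨u, fun i => ?_, fun j => ?_⟩
  · refine (sub_eq_zero.mp (PowerSeries.eq_zero_of_forall_X_pow_dvd fun n => ?_)).symm
    refine (pow_dvd_pow _ n.le_succ).trans ?_
    have := dvd_sub ((newtonSeq_spec hJ hT n).2 i) (dvd_aeval_sub_aeval (fun j => hu j n) (P i))
    rwa [sub_sub_sub_cancel_right] at this
  · rw [PowerSeries.constantCoeff_eq_of_X_dvd_sub (by simpa using hu j 0)]
    exact (newtonSeq_spec hJ hT 0).1 j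

theorem existsUnique_forall_aeval_eq (hJ : IsUnit ((jacobianMatrix P).map (aeval a)).det)
    (T : σ → PowerSeries R) (hT : ∀ i, PowerSeries.constantCoeff (T i) = aeval a (P i)) :
    ∃! u : σ → PowerSeries R, (∀ i, aeval u (P i) = T i) ∧
      ∀ j, PowerSeries.constantCoeff (u j) = a j := by
  obtain ⟨u, huT, hu⟩ := exists_forall_aeval_eq hJ T hT
  exact ⟨u, ⟨huT, hu⟩, fun v ⟨hvT, hv⟩ =>
    eq_of_forall_aeval_eq hJ hv hu fun i => (hvT i).trans (huT i).symm⟩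

end MvPolynomial

theorem stmt4_general (k : Type*) [Field k]
    (F G : MvPolynomial (Fin 2) k)
    (hJ : ∃ c : k, c ≠ 0 ∧
      Matrix.det !![pderiv 0 F, pderiv 1 F; pderiv 0 G, pderiv 1 G] = C c) :
    ∃! UV : PowerSeries (MvPolynomial (Fin 2) k) × PowerSeries (MvPolynomial (Fin 2) k),
      aeval ![UV.1, UV.2] F =
          PowerSeries.X * PowerSeries.C (X 0) + (1 - PowerSeries.X) * PowerSeries.C F ∧
      aeval ![UV.1, UV.2] G =
          PowerSeries.X * PowerSeries.C (X 1) + (1 - PowerSeries.X) * PowerSeries.C G ∧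
      PowerSeries.constantCoeff UV.1 = X 0 ∧
      PowerSeries.constantCoeff UV.2 = X 1 := by
  obtain ⟨c, hc, hdet⟩ := hJ
  have hJX :
      IsUnit ((jacobianMatrix ![F, G]).map (aeval (X : Fin 2 → MvPolynomial (Fin 2) k))).det := by
    have : (jacobianMatrix ![F, G]).map (aeval (X : Fin 2 → MvPolynomial (Fin 2) k)) =
        !![pderiv 0 F, pderiv 1 F; pderiv 0 G, pderiv 1 G] := by
      ext i j
      fin_cases i <;> fin_cases j <;> simp [jacobianMatrix]
    rw [this, hdet]
    exact (Ne.isUnit hc).map C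
  let T : Fin 2 → PowerSeries (MvPolynomial (Fin 2) k) := fun i =>
    PowerSeries.X * PowerSeries.C (X i) + (1 - PowerSeries.X) * PowerSeries.C (![F, G] i)
  have hT : ∀ i, PowerSeries.constantCoeff (T i) = aeval X (![F, G] i) := fun i => by
    simp [T]
  refine (piFinTwoEquiv fun _ => PowerSeries (MvPolynomial (Fin 2) k)).symm.existsUnique_congr
    (fun UV => ?_) |>.mpr (existsUnique_forall_aeval_eq hJX T hT)
  have hUV : (piFinTwoEquiv _).symm UV = ![UV.1, UV.2] :=
    funext (Fin.forall_fin_two.mpr ⟨rfl, rfl⟩)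
  rw [hUV, Fin.forall_fin_two, Fin.forall_fin_two]
  simp only [T, Matrix.cons_val_zero, Matrix.cons_val_one, and_assoc]

/-- If `det Jac(F,G)` is a nonzero constant, the system
`F(𝒰,𝒱) = tX+(1-t)F`, `G(𝒰,𝒱) = tY+(1-t)G` with `𝒰(0)=X`, `𝒱(0)=Y`
has a unique solution in `k[X,Y][[t]]`. -/
theorem stmt4 (k : Type*) [Field k] [CharZero k]
    (F G : MvPolynomial (Fin 2) k)
    (hJ : ∃ c : k, c ≠ 0 ∧
      Matrix.det !![pderiv 0 F, pderiv 1 F; pderiv 0 G, pderiv 1 G] = C c) :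
    ∃! UV : PowerSeries (MvPolynomial (Fin 2) k) × PowerSeries (MvPolynomial (Fin 2) k),
      aeval ![UV.1, UV.2] F =
          PowerSeries.X * PowerSeries.C (X 0) + (1 - PowerSeries.X) * PowerSeries.C F ∧
      aeval ![UV.1, UV.2] G =
          PowerSeries.X * PowerSeries.C (X 1) + (1 - PowerSeries.X) * PowerSeries.C G ∧
      PowerSeries.constantCoeff UV.1 = X 0 ∧
      PowerSeries.constantCoeff UV.2 = X 1 :=
  stmt4_general k F G hJ
end

section
/- Let F, G ∈ k[X,Y] with det Jac(F,G) ∈ k*, and suppose the k-algebra morphism φ with φ(X)=F, φ(Y)=G has a polynomial inverse with φ⁻¹(X)=A, φ⁻¹(Y)=B. Then the unique power series solution (𝒰(t),𝒱(t)) ∈ k[X,Y][[t]] of the system F(𝒰,𝒱)=tX+(1-t)F, G(𝒰,𝒱)=tY+(1-t)G with 𝒰(0)=X, 𝒱(0)=Y is actually polynomial in t, and 𝒰(1)=A(X,Y), 𝒱(1)=B(X,Y). -/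
/-!
Since `φ ∘ ψ = id`, every coordinate is `X i = φ (ψ (X i))`. Substituting `(𝒰, 𝒱)` into `φ P`
is the same as substituting `(F(𝒰,𝒱), G(𝒰,𝒱))` into `P`, and the system says these are the
straight lines `t X + (1 - t) F` and `t Y + (1 - t) G`. Hence `𝒰 = A(tX + (1-t)F, tY + (1-t)G)`
and likewise for `𝒱`: polynomials in `t` whose value at `t = 1` is `A(X, Y)`, resp. `B(X, Y)`.
-/

open MvPolynomial

section

variable {R σ S : Type*} [CommSemiring R] [CommSemiring S] [Algebra R S]

theorem MvPolynomial.aeval_comp_algHom (u : σ → S) (φ : MvPolynomial σ R →ₐ[R] MvPolynomial σ R) :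
    (aeval u).comp φ = aeval fun i => aeval u (φ (X i)) :=
  algHom_ext fun i => by simp

theorem MvPolynomial.eq_aeval_of_comp_eq_id {φ ψ : MvPolynomial σ R →ₐ[R] MvPolynomial σ R}
    (hφψ : φ.comp ψ = AlgHom.id R _) {u v : σ → S} (huv : ∀ i, aeval u (φ (X i)) = v i) (i : σ) :
    u i = aeval v (ψ (X i)) :=
  calc u i = aeval u (φ.comp ψ (X i)) := by rw [hφψ, AlgHom.id_apply, aeval_X]
    _ = aeval (fun j => aeval u (φ (X j))) (ψ (X i)) := by rw [← aeval_comp_algHom]; rfl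
    _ = aeval v (ψ (X i)) := by simp only [huv]

end

section

variable {R σ A : Type*} [CommSemiring R] [CommSemiring A] [Algebra R A]

theorem MvPolynomial.polynomial_eval_aeval (x : A) (w : σ → Polynomial A) (P : MvPolynomial σ R) :
    (aeval w P).eval x = aeval (fun i => (w i).eval x) P :=
  comp_aeval_apply w ((Polynomial.aeval x).restrictScalars R) P

theorem MvPolynomial.polynomial_coe_aeval (w : σ → Polynomial A) (P : MvPolynomial σ R) :
    ((aeval w P : Polynomial A) : PowerSeries A) = aeval (fun i => (w i : PowerSeries A)) P := by
  simpa using comp_aeval_apply w ((Polynomial.coeToPowerSeries.algHom A).restrictScalars R) P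

end

namespace Polynomial

variable {A : Type*} [CommRing A]

noncomputable def lineMap (p q : A) : A[X] :=
  X * C q + (1 - X) * C p

@[simp]
theorem eval_one_lineMap (p q : A) : (lineMap p q).eval 1 = q := by
  simp [lineMap]

@[simp]
theorem coe_lineMap (p q : A) :
    (lineMap p q : PowerSeries A) =
      PowerSeries.X * PowerSeries.C q + (1 - PowerSeries.X) * PowerSeries.C p := by
  simp only [lineMap, coe_add, coe_mul, coe_C, coe_X, coe_sub, coe_one]

end Polynomial

theorem stmt6_general (k : Type*) [Field k]
    (F G A B : MvPolynomial (Fin 2) k)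
    (φ ψ : MvPolynomial (Fin 2) k →ₐ[k] MvPolynomial (Fin 2) k)
    (hφX : φ (X 0) = F) (hφY : φ (X 1) = G)
    (hψX : ψ (X 0) = A) (hψY : ψ (X 1) = B)
    (hinv1 : φ.comp ψ = AlgHom.id k (MvPolynomial (Fin 2) k))
    (U V : PowerSeries (MvPolynomial (Fin 2) k))
    (hFs : aeval ![U, V] F =
      PowerSeries.X * PowerSeries.C (X 0) + (1 - PowerSeries.X) * PowerSeries.C F)
    (hGs : aeval ![U, V] G =
      PowerSeries.X * PowerSeries.C (X 1) + (1 - PowerSeries.X) * PowerSeries.C G) :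
    ∃ p q : Polynomial (MvPolynomial (Fin 2) k),
      U = (p : PowerSeries (MvPolynomial (Fin 2) k)) ∧
      V = (q : PowerSeries (MvPolynomial (Fin 2) k)) ∧
      Polynomial.eval 1 p = A ∧ Polynomial.eval 1 q = B := by
  set w : Fin 2 → Polynomial (MvPolynomial (Fin 2) k) :=
    ![Polynomial.lineMap F (X 0), Polynomial.lineMap G (X 1)]
  have hφ_line : ∀ i, aeval ![U, V] (φ (X i)) = (w i : PowerSeries _) := by
    simp [Fin.forall_fin_two, w, hφX, hφY, hFs, hGs]
  have heval_line : (fun i => (w i).eval 1) = X := by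
    funext i; fin_cases i <;> simp [w]
  have hUV (i : Fin 2) :
      ![U, V] i = ((aeval w (ψ (X i)) : Polynomial _) : PowerSeries _) := by
    rw [polynomial_coe_aeval]
    exact eq_aeval_of_comp_eq_id hinv1 hφ_line i
  refine ⟨aeval w A, aeval w B, ?_, ?_, ?_, ?_⟩
  · simpa [hψX] using hUV 0
  · simpa [hψY] using hUV 1
  · rw [polynomial_eval_aeval, heval_line, aeval_X_left_apply]
  · rw [polynomial_eval_aeval, heval_line, aeval_X_left_apply]

/-- If `φ` (with `φ(X)=F`, `φ(Y)=G`, `det Jac(F,G) ∈ k*`) has a polynomial inverse `ψ`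
with `ψ(X)=A`, `ψ(Y)=B`, then the unique power series solution `(𝒰,𝒱)` of the system
is polynomial in `t`, with `𝒰(1) = A` and `𝒱(1) = B`. -/
theorem stmt6 (k : Type*) [Field k] [CharZero k]
    (F G A B : MvPolynomial (Fin 2) k)
    (hJ : ∃ c : k, c ≠ 0 ∧
      Matrix.det !![pderiv 0 F, pderiv 1 F; pderiv 0 G, pderiv 1 G] = C c)
    (φ ψ : MvPolynomial (Fin 2) k →ₐ[k] MvPolynomial (Fin 2) k)
    (hφX : φ (X 0) = F) (hφY : φ (X 1) = G)
    (hψX : ψ (X 0) = A) (hψY : ψ (X 1) = B)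
    (hinv1 : φ.comp ψ = AlgHom.id k (MvPolynomial (Fin 2) k))
    (hinv2 : ψ.comp φ = AlgHom.id k (MvPolynomial (Fin 2) k))
    (U V : PowerSeries (MvPolynomial (Fin 2) k))
    (hU0 : PowerSeries.constantCoeff U = X 0)
    (hV0 : PowerSeries.constantCoeff V = X 1)
    (hFs : aeval ![U, V] F =
      PowerSeries.X * PowerSeries.C (X 0) + (1 - PowerSeries.X) * PowerSeries.C F)
    (hGs : aeval ![U, V] G =
      PowerSeries.X * PowerSeries.C (X 1) + (1 - PowerSeries.X) * PowerSeries.C G) :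
    ∃ p q : Polynomial (MvPolynomial (Fin 2) k),
      U = (p : PowerSeries (MvPolynomial (Fin 2) k)) ∧
      V = (q : PowerSeries (MvPolynomial (Fin 2) k)) ∧
      Polynomial.eval 1 p = A ∧ Polynomial.eval 1 q = B :=
  stmt6_general k F G A B φ ψ hφX hφY hψX hψY hinv1 U V hFs hGs
end

section
/- Let k ⊆ L be an extension of fields of characteristic 0, and F, G ∈ k[X,Y]. Assume there exist A, B ∈ L[X,Y] with A(F,G)=X, B(F,G)=Y, F(A,B)=X, G(A,B)=Y (all identities in L[X,Y]). Then A and B have all coefficients in k, i.e., A, B ∈ k[X,Y]. -/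
/-!
Choose a `k`-linear retraction `π : L → k` of the inclusion and apply it coefficientwise, sending
`L[X,Y]` to `k[X,Y]`. Because `F` and `G` have coefficients in `k`, the substitution
`Φ = (F, G)` commutes with this coefficient map. `Φ` is injective (it has the left inverse
`(A, B)`), and `Φ A = X` already has coefficients in `k`; hence `Φ` sends `A` and `π A` to the
same polynomial, so `A = π A` lies in `k[X,Y]`, and likewise for `B`.
-/

open MvPolynomial

namespace MvPolynomial

variable {R S σ τ : Type*} [CommSemiring R] [CommSemiring S]

theorem addMonoidAlgebraMap_monomial (g : S →+ R) (u : σ →₀ ℕ) (c : S) :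
    AddMonoidAlgebra.map g (monomial u c) = monomial u (g c) := by
  classical
  ext m
  simp only [coeff_addMonoidAlgebraMap, coeff_monomial]
  split_ifs <;> simp

variable [Algebra R S]

theorem addMonoidAlgebraMap_map_of_leftInverse (g : S →+ R)
    (hg : Function.LeftInverse g (algebraMap R S)) (N : MvPolynomial σ R) :
    AddMonoidAlgebra.map g (map (algebraMap R S) N) = N := by
  ext m
  rw [coeff_addMonoidAlgebraMap, coeff_map, hg]

theorem addMonoidAlgebraMap_mul_map (g : S →ₗ[R] R) (Q : MvPolynomial σ S)
    (N : MvPolynomial σ R) :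
    AddMonoidAlgebra.map g.toAddMonoidHom (Q * map (algebraMap R S) N)
      = AddMonoidAlgebra.map g.toAddMonoidHom Q * N := by
  classical
  ext m
  simp only [coeff_addMonoidAlgebraMap, coeff_mul, coeff_map, map_sum]
  refine Finset.sum_congr rfl fun x _ => ?_
  rw [mul_comm, ← Algebra.smul_def, LinearMap.toAddMonoidHom_coe, map_smul, smul_eq_mul, mul_comm]

theorem addMonoidAlgebraMap_aeval_map (g : S →ₗ[R] R) (f : σ → MvPolynomial τ R)
    (P : MvPolynomial σ S) :
    AddMonoidAlgebra.map g.toAddMonoidHom (aeval (fun i => map (algebraMap R S) (f i)) P)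
      = aeval f (AddMonoidAlgebra.map g.toAddMonoidHom P) := by
  induction P using induction_on' with
  | monomial u c =>
    rw [aeval_monomial, addMonoidAlgebraMap_monomial, aeval_monomial, algebraMap_eq, algebraMap_eq]
    simp only [← map_pow, ← map_finsuppProd, addMonoidAlgebraMap_mul_map, ← monomial_zero',
      addMonoidAlgebraMap_monomial]
  | add P Q hP hQ =>
    simp only [map_add, AddMonoidAlgebra.map_add, hP, hQ]

theorem map_aeval_eq_aeval_map (f : σ → MvPolynomial τ R) (P : MvPolynomial σ R) :
    map (algebraMap R S) (aeval f P)
      = aeval (fun i => map (algebraMap R S) (f i)) (map (algebraMap R S) P) := by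
  rw [aeval_map_algebraMap]
  exact comp_aeval_apply f (mapAlgHom (Algebra.ofId R S)) P

end MvPolynomial

theorem MvPolynomial.exists_eq_map_of_aeval_eq_map {k L σ τ : Type*} [Field k] [CommRing L]
    [Nontrivial L] [Algebra k L] (f : σ → MvPolynomial τ k)
    (hinj : Function.Injective (aeval (R := L) fun i => map (algebraMap k L) (f i)))
    {P : MvPolynomial σ L} {Q : MvPolynomial τ k}
    (hP : aeval (fun i => map (algebraMap k L) (f i)) P = map (algebraMap k L) Q) :
    ∃ P₀ : MvPolynomial σ k, P = map (algebraMap k L) P₀ := by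
  obtain ⟨π, hπ⟩ := LinearMap.exists_leftInverse_of_injective (Algebra.linearMap k L)
    (LinearMap.ker_eq_bot.mpr (algebraMap k L).injective)
  have hπ' : Function.LeftInverse π.toAddMonoidHom (algebraMap k L) := LinearMap.congr_fun hπ
  refine ⟨AddMonoidAlgebra.map π.toAddMonoidHom P, hinj ?_⟩
  rw [hP, ← map_aeval_eq_aeval_map, ← addMonoidAlgebraMap_aeval_map, hP,
    addMonoidAlgebraMap_map_of_leftInverse _ hπ']

theorem stmt7_general (k L : Type*) [Field k] [Field L] [Algebra k L]
    (F G : MvPolynomial (Fin 2) k) (A B : MvPolynomial (Fin 2) L)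
    (hA : aeval ![map (algebraMap k L) F, map (algebraMap k L) G] A = X 0)
    (hB : aeval ![map (algebraMap k L) F, map (algebraMap k L) G] B = X 1)
    (hF : aeval ![A, B] (map (algebraMap k L) F) = X 0)
    (hG : aeval ![A, B] (map (algebraMap k L) G) = X 1) :
    ∃ A₀ B₀ : MvPolynomial (Fin 2) k,
      A = map (algebraMap k L) A₀ ∧ B = map (algebraMap k L) B₀ := by
  have hinv : Function.LeftInverse (aeval ![A, B])
      (aeval ![map (algebraMap k L) F, map (algebraMap k L) G]) := by
    have hcomp : (aeval ![A, B]).comp (aeval ![map (algebraMap k L) F, map (algebraMap k L) G])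
        = AlgHom.id L _ := by
      refine algHom_ext fun i => ?_
      fin_cases i
      · simpa using hF
      · simpa using hG
    exact AlgHom.congr_fun hcomp
  have hFG : ![map (algebraMap k L) F, map (algebraMap k L) G]
      = fun i => map (algebraMap k L) (![F, G] i) := by
    funext i
    fin_cases i <;> rfl
  rw [hFG] at hA hB hinv
  obtain ⟨A₀, rfl⟩ := exists_eq_map_of_aeval_eq_map _ hinv.injective (hA.trans (map_X _ 0).symm)
  obtain ⟨B₀, rfl⟩ := exists_eq_map_of_aeval_eq_map _ hinv.injective (hB.trans (map_X _ 1).symm)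
  exact ⟨A₀, B₀, rfl, rfl⟩

/-- If `F, G ∈ k[X,Y]` admit polynomial inverses `A, B` with coefficients in an
extension field `L ⊇ k`, then in fact `A, B ∈ k[X,Y]`. -/
theorem stmt7 (k L : Type*) [Field k] [Field L] [CharZero k] [Algebra k L]
    (F G : MvPolynomial (Fin 2) k) (A B : MvPolynomial (Fin 2) L)
    (hA : aeval ![map (algebraMap k L) F, map (algebraMap k L) G] A = X 0)
    (hB : aeval ![map (algebraMap k L) F, map (algebraMap k L) G] B = X 1)
    (hF : aeval ![A, B] (map (algebraMap k L) F) = X 0)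
    (hG : aeval ![A, B] (map (algebraMap k L) G) = X 1) :
    ∃ A₀ B₀ : MvPolynomial (Fin 2) k,
      A = map (algebraMap k L) A₀ ∧ B = map (algebraMap k L) B₀ :=
  stmt7_general k L F G A B hA hB hF hG
end

section
/- Let a, b ∈ k*, n ≥ 1, and set F = X + (1/a)(aX - bY)ⁿ, G = Y + (1/b)(aX - bY)ⁿ. Then 𝒰(t) = X - (t/a)(aX - bY)ⁿ and 𝒱(t) = Y - (t/b)(aX - bY)ⁿ satisfy F(𝒰(t),𝒱(t)) = tX + (1-t)F and G(𝒰(t),𝒱(t)) = tY + (1-t)G. -/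
open MvPolynomial

/-- For `F = X + (1/a)(aX-bY)ⁿ`, `G = Y + (1/b)(aX-bY)ⁿ`, the polynomials
`𝒰(t) = X - (t/a)(aX-bY)ⁿ`, `𝒱(t) = Y - (t/b)(aX-bY)ⁿ` solve
`F(𝒰,𝒱) = tX+(1-t)F` and `G(𝒰,𝒱) = tY+(1-t)G`. -/
theorem stmt10 (k : Type*) [Field k] [CharZero k] (a b : k) (ha : a ≠ 0) (hb : b ≠ 0)
    (n : ℕ) (hn : 1 ≤ n)
    (F G : MvPolynomial (Fin 2) k)
    (hF : F = X 0 + C a⁻¹ * (C a * X 0 - C b * X 1) ^ n)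
    (hG : G = X 1 + C b⁻¹ * (C a * X 0 - C b * X 1) ^ n)
    (U V : Polynomial (MvPolynomial (Fin 2) k))
    (hU : U = Polynomial.C (X 0) -
      Polynomial.X * Polynomial.C (C a⁻¹ * (C a * X 0 - C b * X 1) ^ n))
    (hV : V = Polynomial.C (X 1) -
      Polynomial.X * Polynomial.C (C b⁻¹ * (C a * X 0 - C b * X 1) ^ n)) :
    aeval ![U, V] F =
      Polynomial.X * Polynomial.C (X 0) + (1 - Polynomial.X) * Polynomial.C F ∧
    aeval ![U, V] G =
      Polynomial.X * Polynomial.C (X 1) + (1 - Polynomial.X) * Polynomial.C G := by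
  have h1 : (C a : MvPolynomial (Fin 2) k) * C a⁻¹ = 1 := by
    rw [← C_mul, mul_inv_cancel₀ ha, C_1]
  have h2 : (C b : MvPolynomial (Fin 2) k) * C b⁻¹ = 1 := by
    rw [← C_mul, mul_inv_cancel₀ hb, C_1]
  have key : aeval ![U, V] (C a * X 0 - C b * X 1) =
      Polynomial.C (C a * X 0 - C b * X 1) := by
    subst hU hV
    simp only [map_sub, map_mul, aeval_C, aeval_X, Matrix.cons_val_zero, Matrix.cons_val_one,
      Matrix.head_cons, algebraMap_eq, Polynomial.algebraMap_apply]

    have h1' : Polynomial.C (C a : MvPolynomial (Fin 2) k) * Polynomial.C (C a⁻¹) = 1 := by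
      rw [← Polynomial.C_mul, h1, Polynomial.C_1]
    have h2' : Polynomial.C (C b : MvPolynomial (Fin 2) k) * Polynomial.C (C b⁻¹) = 1 := by
      rw [← Polynomial.C_mul, h2, Polynomial.C_1]
    linear_combination (Polynomial.X * Polynomial.C ((C a * X 0 - C b * X 1) ^ n) :
      Polynomial (MvPolynomial (Fin 2) k)) * (h2' - h1')
  subst hF hG
  constructor <;>
  · simp only [map_add, map_mul, map_pow, aeval_C, aeval_X, key, Matrix.cons_val_zero,
      Matrix.cons_val_one, Matrix.head_cons, Polynomial.algebraMap_apply, algebraMap_eq,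
      Polynomial.C_add, Polynomial.C_mul, Polynomial.C_pow]
    subst hU hV
    simp only [Polynomial.C_mul, Polynomial.C_pow]
    ring
end

section
/- Let F₁,...,Fₘ ∈ k[X₁,...,Xₘ] such that the determinant of the Jacobian matrix of (F₁,...,Fₘ) lies in k*. Then the system Fᵢ(𝒰₁(t),...,𝒰ₘ(t)) = tXᵢ + (1-t)Fᵢ(X₁,...,Xₘ) for all 1 ≤ i ≤ m, with initial conditions 𝒰ᵢ(0) = Xᵢ, has a unique solution 𝒰₁(t),...,𝒰ₘ(t) ∈ k[X₁,...,Xₘ][[t]]. -/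
/-!
Write `Uⱼ = Σₙ uⱼ,ₙ tⁿ`. If `U` and `W` agree modulo `tⁿ⁺¹`, a first-order Taylor expansion
shows that the coefficients of `tⁿ⁺¹` in `Fᵢ(U)` and `Fᵢ(W)` differ by `J · (uₙ₊₁ - wₙ₊₁)`, where
`J` is the Jacobian matrix evaluated at the common constant term. Since `J` is invertible, the
coefficient of `tⁿ⁺¹` of a solution is determined by its lower coefficients (uniqueness), and
these coefficients can be constructed one at a time by Newton's iteration (existence).
-/
open MvPolynomial
open scoped Matrix PowerSeries

section

variable {R A σ : Type*} [CommRing R] [CommRing A] [Algebra R A] [Fintype σ]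

theorem sq_dvd_aeval_add_sub_aeval_sub_sum_pderiv (s : A) (W E : σ → A) (hE : ∀ j, s ∣ E j)
    (P : MvPolynomial σ R) :
    s ^ 2 ∣ aeval (W + E) P - aeval W P - ∑ l, aeval W (pderiv l P) * E l := by
  classical
  induction P using MvPolynomial.induction_on with
  | C c => simp
  | add p q hp hq =>
    convert dvd_add hp hq using 1
    simp only [map_add, add_mul, Finset.sum_add_distrib]
    ring
  | mul_X p j hp =>
    have hdiff : s ∣ aeval (W + E) p - aeval W p := by
      have := dvd_add ((dvd_pow_self s two_ne_zero).trans hp)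
        (Finset.dvd_sum (s := Finset.univ) fun l _ => (hE l).mul_left (aeval W (pderiv l p)))
      rwa [sub_add_cancel] at this
    have hsum : ∑ l, aeval W (pderiv l (p * X j)) * E l
        = (∑ l, aeval W (pderiv l p) * E l) * W j + aeval W p * E j := by
      simp only [Derivation.leibniz, pderiv_X, Pi.single_apply, apply_ite, smul_eq_mul, mul_one,
        mul_zero, map_add, map_zero, map_mul, aeval_X, add_mul, ite_mul, zero_mul,
        Finset.sum_add_distrib, Finset.sum_ite_eq, Finset.mem_univ, if_true, Finset.sum_mul]
      rw [add_comm]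
      exact congrArg (· + _) (Finset.sum_congr rfl fun _ _ => by ring)
    have hsplit : aeval (W + E) (p * X j) - aeval W (p * X j)
          - ∑ l, aeval W (pderiv l (p * X j)) * E l
        = (aeval (W + E) p - aeval W p - ∑ l, aeval W (pderiv l p) * E l) * W j
          + (aeval (W + E) p - aeval W p) * E j := by
      rw [hsum]; simp only [map_mul, aeval_X, Pi.add_apply]; ring
    rw [hsplit, sq]
    exact dvd_add ((sq s ▸ hp).mul_right _) (mul_dvd_mul hdiff (hE j))

theorem constantCoeff_aeval {ι : Type*} (W : ι → A⟦X⟧) (P : MvPolynomial ι R) :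
    PowerSeries.constantCoeff (aeval W P) = aeval (fun j => PowerSeries.constantCoeff (W j)) P := by
  induction P using MvPolynomial.induction_on with
  | C c => simp [PowerSeries.algebraMap_apply]
  | add p q hp hq => simp only [map_add, hp, hq]
  | mul_X p j hp => simp only [map_mul, hp, aeval_X]

theorem PowerSeries.coeff_mul_of_X_pow_dvd {n : ℕ} (g : A⟦X⟧) {e : A⟦X⟧}
    (he : PowerSeries.X ^ n ∣ e) : coeff n (g * e) = constantCoeff g * coeff n e := by
  obtain ⟨e, rfl⟩ := he
  rw [mul_left_comm, coeff_X_pow_mul', coeff_X_pow_mul']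
  simp [coeff_zero_eq_constantCoeff]

noncomputable def jacobianAt (F : σ → MvPolynomial σ R) (a : σ → A) : Matrix σ σ A :=
  Matrix.of fun i j => aeval a (pderiv j (F i))

theorem coeff_succ_aeval_add_sub_coeff_succ_aeval (F : σ → MvPolynomial σ R) (n : ℕ)
    (W E : σ → A⟦X⟧) (hE : ∀ j, PowerSeries.X ^ (n + 1) ∣ E j) :
    (fun i => PowerSeries.coeff (n + 1) (aeval (W + E) (F i))
        - PowerSeries.coeff (n + 1) (aeval W (F i))) =
      jacobianAt F (fun j => PowerSeries.constantCoeff (W j)) *ᵥ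
        fun l => PowerSeries.coeff (n + 1) (E l) := by
  funext i
  obtain ⟨r, hr⟩ := sq_dvd_aeval_add_sub_aeval_sub_sum_pderiv _ W E hE (F i)
  have hcoeff := congrArg (PowerSeries.coeff (n + 1)) hr
  rw [← pow_mul, PowerSeries.coeff_X_pow_mul', if_neg (by omega), map_sub, map_sub,
    map_sum] at hcoeff
  simp only [PowerSeries.coeff_mul_of_X_pow_dvd _ (hE _), constantCoeff_aeval] at hcoeff
  simp only [Matrix.mulVec, dotProduct, jacobianAt, Matrix.of_apply]
  linear_combination hcoeff

theorem eq_of_aeval_eq [DecidableEq σ] (F : σ → MvPolynomial σ R) {a : σ → A}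
    (hJ : (jacobianAt F a).det ∈ nonZeroDivisors A) {U V : σ → A⟦X⟧}
    (hU : ∀ j, PowerSeries.constantCoeff (U j) = a j)
    (hV : ∀ j, PowerSeries.constantCoeff (V j) = a j)
    (h : ∀ i, aeval U (F i) = aeval V (F i)) : U = V := by
  suffices ∀ n j, PowerSeries.coeff n (U j) = PowerSeries.coeff n (V j) from
    funext fun j => PowerSeries.ext fun n => this n j
  intro n
  induction n using Nat.strong_induction_on with
  | _ n ih =>
    cases n with
    | zero => simp [hU, hV]
    | succ n =>
      have hdvd (j : σ) : PowerSeries.X ^ (n + 1) ∣ U j - V j :=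
        PowerSeries.X_pow_dvd_iff.mpr fun d hd => by rw [map_sub, ih d hd, sub_self]
      have hker := coeff_succ_aeval_add_sub_coeff_succ_aeval F n V (U - V) hdvd
      simp only [add_sub_cancel, h, sub_self, funext hV] at hker
      intro j
      have := congrFun (Matrix.mulVec_injective_of_det_mem_nonZeroDivisors hJ
        (hker.symm.trans (Matrix.mulVec_zero _).symm)) j
      simpa [sub_eq_zero] using this

noncomputable def newtonApprox (F : σ → MvPolynomial σ R) (Jinv : Matrix σ σ A) (a : σ → A)
    (G : σ → A⟦X⟧) : ℕ → σ → A⟦X⟧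
  | 0 => fun j => PowerSeries.C (a j)
  | n + 1 =>
    let residual := fun i =>
      PowerSeries.coeff (n + 1) (G i - aeval (newtonApprox F Jinv a G n) (F i))
    newtonApprox F Jinv a G n + fun j => PowerSeries.monomial (n + 1) ((Jinv *ᵥ residual) j)

section newtonApprox

variable (F : σ → MvPolynomial σ R) (Jinv : Matrix σ σ A) (a : σ → A) (G : σ → A⟦X⟧)

theorem coeff_newtonApprox_of_le {d n : ℕ} (hdn : d ≤ n) (j : σ) :
    PowerSeries.coeff d (newtonApprox F Jinv a G n j) =
      PowerSeries.coeff d (newtonApprox F Jinv a G d j) := by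
  induction n, hdn using Nat.le_induction with
  | base => rfl
  | succ n hdn ih =>
    rw [newtonApprox, Pi.add_apply, map_add, PowerSeries.coeff_monomial, if_neg (by omega),
      add_zero, ih]

theorem constantCoeff_newtonApprox (n : ℕ) (j : σ) :
    PowerSeries.constantCoeff (newtonApprox F Jinv a G n j) = a j := by
  rw [← PowerSeries.coeff_zero_eq_constantCoeff_apply,
    coeff_newtonApprox_of_le F Jinv a G (Nat.zero_le n)]
  simp [newtonApprox]

noncomputable def newtonLimit (j : σ) : A⟦X⟧ :=
  PowerSeries.mk fun d => PowerSeries.coeff d (newtonApprox F Jinv a G d j)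

theorem constantCoeff_newtonLimit (j : σ) :
    PowerSeries.constantCoeff (newtonLimit F Jinv a G j) = a j := by
  rw [← PowerSeries.coeff_zero_eq_constantCoeff_apply, newtonLimit, PowerSeries.coeff_mk,
    PowerSeries.coeff_zero_eq_constantCoeff_apply, constantCoeff_newtonApprox]

theorem X_pow_dvd_newtonLimit_sub_newtonApprox (n : ℕ) (j : σ) :
    PowerSeries.X ^ (n + 1) ∣ newtonLimit F Jinv a G j - newtonApprox F Jinv a G n j :=
  PowerSeries.X_pow_dvd_iff.mpr fun d hd => by
    rw [newtonLimit, map_sub, PowerSeries.coeff_mk,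
      coeff_newtonApprox_of_le F Jinv a G (Nat.lt_succ_iff.mp hd), sub_self]

theorem coeff_succ_newtonLimit_sub_newtonApprox (n : ℕ) :
    (fun j => PowerSeries.coeff (n + 1) ((newtonLimit F Jinv a G - newtonApprox F Jinv a G n) j)) =
      Jinv *ᵥ fun i =>
        PowerSeries.coeff (n + 1) (G i - aeval (newtonApprox F Jinv a G n) (F i)) := by
  funext j
  simp [newtonLimit, newtonApprox]

end newtonApprox

theorem exists_aeval_eq [DecidableEq σ] (F : σ → MvPolynomial σ R) {a : σ → A}
    (hJ : IsUnit (jacobianAt F a).det) (G : σ → A⟦X⟧)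
    (hG : ∀ i, PowerSeries.constantCoeff (G i) = aeval a (F i)) :
    ∃ U : σ → A⟦X⟧, (∀ i, aeval U (F i) = G i) ∧ ∀ j, PowerSeries.constantCoeff (U j) = a j := by
  set U := newtonLimit F (jacobianAt F a)⁻¹ a G
  set W := newtonApprox F (jacobianAt F a)⁻¹ a G
  have hU (j : σ) : PowerSeries.constantCoeff (U j) = a j := constantCoeff_newtonLimit F _ a G j
  refine ⟨U, fun i => PowerSeries.ext fun n => ?_, hU⟩
  cases n with
  | zero => simp only [PowerSeries.coeff_zero_eq_constantCoeff_apply, constantCoeff_aeval, hU, hG]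
  | succ n =>
    have hstep := coeff_succ_aeval_add_sub_coeff_succ_aeval F n (W n) (U - W n)
      (X_pow_dvd_newtonLimit_sub_newtonApprox F _ a G n)
    have hcc : (fun j => PowerSeries.constantCoeff (W n j)) = a :=
      funext (constantCoeff_newtonApprox F _ a G n)
    rw [add_sub_cancel, hcc, coeff_succ_newtonLimit_sub_newtonApprox, Matrix.mulVec_mulVec,
      Matrix.mul_nonsing_inv _ hJ, Matrix.one_mulVec] at hstep
    exact sub_left_inj.mp ((congrFun hstep i).trans (map_sub _ _ _))

theorem existsUnique_aeval_eq [DecidableEq σ] (F : σ → MvPolynomial σ R) {a : σ → A}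
    (hJ : IsUnit (jacobianAt F a).det) (G : σ → A⟦X⟧)
    (hG : ∀ i, PowerSeries.constantCoeff (G i) = aeval a (F i)) :
    ∃! U : σ → A⟦X⟧, (∀ i, aeval U (F i) = G i) ∧ ∀ j, PowerSeries.constantCoeff (U j) = a j :=
  let ⟨U, hUF, hUa⟩ := exists_aeval_eq F hJ G hG
  ⟨U, ⟨hUF, hUa⟩, fun _ ⟨hVF, hVa⟩ =>
    eq_of_aeval_eq F hJ.mem_nonZeroDivisors hVa hUa fun i => (hVF i).trans (hUF i).symm⟩

end

theorem stmt13_general (k : Type*) [Field k] (m : ℕ)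
    (F : Fin m → MvPolynomial (Fin m) k)
    (hJ : ∃ c : k, c ≠ 0 ∧
      Matrix.det (Matrix.of fun i j => pderiv j (F i)) = C c) :
    ∃! U : Fin m → PowerSeries (MvPolynomial (Fin m) k),
      (∀ i, aeval U (F i) =
        PowerSeries.X * PowerSeries.C (X i) + (1 - PowerSeries.X) * PowerSeries.C (F i)) ∧
      (∀ i, PowerSeries.constantCoeff (U i) = X i) := by
  obtain ⟨c, hc, hdet⟩ := hJ
  have hJX : jacobianAt F X = Matrix.of fun i j => pderiv j (F i) := by
    simp [jacobianAt]
  refine existsUnique_aeval_eq F ?_ _ fun i => ?_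
  · rw [hJX, hdet]
    exact hc.isUnit.map C
  · simp

/-- If `det Jac(F₁,...,Fₘ)` is a nonzero constant, the system
`Fᵢ(𝒰₁,...,𝒰ₘ) = tXᵢ + (1-t)Fᵢ` with `𝒰ᵢ(0) = Xᵢ` has a unique solution in
`k[X₁,...,Xₘ][[t]]`. -/
theorem stmt13 (k : Type*) [Field k] [CharZero k] (m : ℕ)
    (F : Fin m → MvPolynomial (Fin m) k)
    (hJ : ∃ c : k, c ≠ 0 ∧
      Matrix.det (Matrix.of fun i j => pderiv j (F i)) = C c) :
    ∃! U : Fin m → PowerSeries (MvPolynomial (Fin m) k),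
      (∀ i, aeval U (F i) =
        PowerSeries.X * PowerSeries.C (X i) + (1 - PowerSeries.X) * PowerSeries.C (F i)) ∧
      (∀ i, PowerSeries.constantCoeff (U i) = X i) :=
  stmt13_general k m F hJ
end

section
/- Let k ⊆ L be a field extension with char k = 0, and F₁,...,Fₘ ∈ k[X₁,...,Xₘ]. Suppose there exist A₁,...,Aₘ ∈ L[X₁,...,Xₘ] with Fᵢ(A₁,...,Aₘ) = Xᵢ and Aᵢ(F₁,...,Fₘ) = Xᵢ for all i. Then Aᵢ ∈ k[X₁,...,Xₘ] for all i. -/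
/-!
Choose a `k`-linear retraction `π : L → k` of the inclusion and apply it to coefficients. Since
the `Fⱼ` have coefficients in `k`, substituting them commutes with `π`, so applying `π` to
`Aᵢ(F) = Xᵢ` gives `(π Aᵢ)(F) = Xᵢ = Aᵢ(F)`. Substitution of the `Fⱼ` is injective, as it has the
left inverse "substitute the `Aⱼ`", hence `Aᵢ = π Aᵢ` has coefficients in `k`.
-/

open MvPolynomial

namespace MvPolynomial

section MapLinear

variable {σ τ R S : Type*} [CommSemiring R] [CommSemiring S] [Algebra R S]

noncomputable def mapLinear (π : S →ₗ[R] R) : MvPolynomial σ S →ₗ[R] MvPolynomial σ R :=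
  (AddMonoidAlgebra.coeffLinearEquiv R).symm.toLinearMap ∘ₗ Finsupp.mapRange.linearMap π ∘ₗ
    (AddMonoidAlgebra.coeffLinearEquiv R).toLinearMap

@[simp]
theorem coeff_mapLinear (π : S →ₗ[R] R) (p : MvPolynomial σ S) (u : σ →₀ ℕ) :
    coeff u (mapLinear π p) = π (coeff u p) := rfl

theorem mapLinear_smul_map (π : S →ₗ[R] R) (s : S) (q : MvPolynomial σ R) :
    mapLinear π (s • map (algebraMap R S) q) = π s • q := by
  ext u
  rw [coeff_mapLinear, coeff_smul, coeff_map, smul_eq_mul, mul_comm, ← Algebra.smul_def,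
    map_smul, coeff_smul, smul_eq_mul, smul_eq_mul, mul_comm]

theorem mapLinear_map (π : S →ₗ[R] R) (hπ : ∀ r, π (algebraMap R S r) = r)
    (q : MvPolynomial σ R) : mapLinear π (map (algebraMap R S) q) = q := by
  ext u
  rw [coeff_mapLinear, coeff_map, hπ]

theorem mapLinear_bind₁_map (π : S →ₗ[R] R) (F : σ → MvPolynomial τ R) (p : MvPolynomial σ S) :
    mapLinear π (bind₁ (fun i => map (algebraMap R S) (F i)) p) = bind₁ F (mapLinear π p) := by
  induction p using induction_on' with
  | monomial u s =>
    have hmon : monomial u s = s • map (algebraMap R S) (monomial u 1 : MvPolynomial σ R) := by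
      rw [map_monomial, map_one, smul_monomial, smul_eq_mul, mul_one]
    rw [hmon, map_smul, ← map_bind₁, mapLinear_smul_map, mapLinear_smul_map, map_smul]
  | add p q hp hq => simp only [map_add, hp, hq]

end MapLinear

variable {σ τ K L : Type*} [Field K] [CommRing L] [Nontrivial L] [Algebra K L]

theorem exists_map_eq_of_bind₁_map_eq_map {F : σ → MvPolynomial τ K}
    (hF : Function.Injective (bind₁ fun i => map (algebraMap K L) (F i)))
    {p : MvPolynomial σ L} {q : MvPolynomial τ K}
    (hpq : bind₁ (fun i => map (algebraMap K L) (F i)) p = map (algebraMap K L) q) :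
    ∃ p₀ : MvPolynomial σ K, p = map (algebraMap K L) p₀ := by
  obtain ⟨π, hπ⟩ := LinearMap.exists_leftInverse_of_injective (Algebra.linearMap K L)
    (LinearMap.ker_eq_bot.mpr (algebraMap K L).injective)
  have hπ' (r : K) : π (algebraMap K L r) = r := LinearMap.congr_fun hπ r
  refine ⟨mapLinear π p, hF ?_⟩
  rw [← map_bind₁, ← mapLinear_bind₁_map, hpq, mapLinear_map π hπ']

end MvPolynomial

theorem stmt14_general (k L : Type*) [Field k] [Field L] [Algebra k L] (m : ℕ)
    (F : Fin m → MvPolynomial (Fin m) k) (A : Fin m → MvPolynomial (Fin m) L)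
    (hFA : ∀ i, aeval A (map (algebraMap k L) (F i)) = X i)
    (hAF : ∀ i, aeval (fun j => map (algebraMap k L) (F j)) (A i) = X i) :
    ∀ i, ∃ A₀ : MvPolynomial (Fin m) k, A i = map (algebraMap k L) A₀ := by
  have hinv : Function.LeftInverse (bind₁ A) (bind₁ fun j => map (algebraMap k L) (F j)) := by
    have hX : (fun j => bind₁ A (map (algebraMap k L) (F j))) = X := funext hFA
    intro p
    rw [bind₁_bind₁, hX, bind₁_X_left, AlgHom.id_apply]
  intro i
  refine exists_map_eq_of_bind₁_map_eq_map hinv.injective (q := X i) ?_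
  rw [map_X]
  exact hAF i

/-- If `F₁,...,Fₘ ∈ k[X₁,...,Xₘ]` admit polynomial inverses `A₁,...,Aₘ` with
coefficients in an extension field `L ⊇ k`, then each `Aᵢ` lies in `k[X₁,...,Xₘ]`. -/
theorem stmt14 (k L : Type*) [Field k] [Field L] [CharZero k] [Algebra k L] (m : ℕ)
    (F : Fin m → MvPolynomial (Fin m) k) (A : Fin m → MvPolynomial (Fin m) L)
    (hFA : ∀ i, aeval A (map (algebraMap k L) (F i)) = X i)
    (hAF : ∀ i, aeval (fun j => map (algebraMap k L) (F j)) (A i) = X i) :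
    ∀ i, ∃ A₀ : MvPolynomial (Fin m) k, A i = map (algebraMap k L) A₀ :=
  stmt14_general k L m F A hFA hAF
end
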